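/- Let Λ be a row-finite k-graph (with no sources) containing a periodic pair (α, β): distinct paths with s(α) = s(β) such that for every η with r(η) = s(α), the set Λ^min(αη, βη) is nonempty. Then the talented monoid T_Λ contains a nonzero periodic element, i.e., some 0 ≠ a ∈ T_Λ and 0 ≠ p ∈ ℤ^k with ᵖa = a. Equivalently, if ℤ^k acts freely on T_Λ then Λ is aperiodic in the sense of Lewin–Sims. -/

import Mathlib

/-- A (small) `k`-graph: a small category `Λ` with vertex set `V`, path set `P`,
range and source maps `r, s`, a degree functor `d : Λ → ℕᵏ` satisfying the
unique factorization property. -/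
structure KGraph (k : ℕ) where
  V : Type
  P : Type
  r : P → V
  s : P → V
  d : P → Fin k → ℕ
  ident : V → P
  comp : (p q : P) → s p = r q → P
  r_ident : ∀ v, r (ident v) = v
  s_ident : ∀ v, s (ident v) = v
  d_ident : ∀ v, d (ident v) = 0
  r_comp : ∀ p q h, r (comp p q h) = r p
  s_comp : ∀ p q h, s (comp p q h) = s q
  d_comp : ∀ p q h, d (comp p q h) = d p + d q
  ident_comp : ∀ (p : P) (h : s (ident (r p)) = r p), comp (ident (r p)) p h = p
  comp_ident : ∀ (p : P) (h : s p = r (ident (s p))), comp p (ident (s p)) h = p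
  comp_assoc : ∀ (p q t : P) (h1 : s p = r q) (h2 : s q = r t)
      (h3 : s (comp p q h1) = r t) (h4 : s p = r (comp q t h2)),
      comp (comp p q h1) t h3 = comp p (comp q t h2) h4
  factor : ∀ (p : P) (m n : Fin k → ℕ), d p = m + n →
      ∃! qt : P × P, ∃ h : s qt.1 = r qt.2,
        comp qt.1 qt.2 h = p ∧ d qt.1 = m ∧ d qt.2 = n

namespace KGraph

variable {k : ℕ}

/-- `vΛⁿ`, the set of paths with range `v` and degree `n`. -/
def pathsSet (Λ : KGraph k) (v : Λ.V) (n : Fin k → ℕ) : Set Λ.P :=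
  {p | Λ.r p = v ∧ Λ.d p = n}

/-- `Λ` is row-finite if every `vΛⁿ` is finite. -/
def RowFinite (Λ : KGraph k) : Prop := ∀ v n, (Λ.pathsSet v n).Finite

/-- `Λ` has no sources if every `vΛⁿ` is nonempty. -/
def NoSources (Λ : KGraph k) : Prop := ∀ v n, (Λ.pathsSet v n).Nonempty

/-- The element `Σ_{λ ∈ vΛⁿ} s(λ)` of the free commutative monoid `ℕ^(Λ⁰)`. -/
noncomputable def vSum (Λ : KGraph k) (hfin : Λ.RowFinite) (v : Λ.V) (n : Fin k → ℕ) :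
    Λ.V →₀ ℕ :=
  ∑ p ∈ (hfin v n).toFinset, Finsupp.single (Λ.s p) 1

end KGraph

namespace KGraph

/-- The free commutative monoid on `Λ⁰ × ℤᵏ`. -/
abbrev TalF (Λ : KGraph k) : Type := (Λ.V × (Fin k → ℤ)) →₀ ℕ

/-- The defining relations of the talented monoid:
`v(n) = Σ_{α ∈ vΛ^{e_i}} s(α)(n + e_i)`. -/
noncomputable def TalRel (Λ : KGraph k) (hfin : Λ.RowFinite) : TalF Λ → TalF Λ → Prop :=
  fun a b => ∃ (v : Λ.V) (n : Fin k → ℤ) (i : Fin k),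
    a = Finsupp.single (v, n) 1 ∧
    b = ∑ p ∈ (hfin v (Pi.single i 1)).toFinset,
          Finsupp.single (Λ.s p, n + Pi.single i 1) 1

/-- The congruence generated by the defining relations of the talented monoid. -/
noncomputable def TalCon (Λ : KGraph k) (hfin : Λ.RowFinite) : AddCon (TalF Λ) :=
  addConGen (TalRel Λ hfin)

/-- The talented monoid `T_Λ`. -/
abbrev Tal (Λ : KGraph k) (hfin : Λ.RowFinite) : Type := (TalCon Λ hfin).Quotient

/-- The quotient map `ℕ^(Λ⁰ × ℤᵏ) → T_Λ`. -/
noncomputable def tmk (Λ : KGraph k) (hfin : Λ.RowFinite) : TalF Λ → Tal Λ hfin :=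
  (TalCon Λ hfin).mk'

/-- Shift of states on the free commutative monoid; it induces the `ℤᵏ`-action on `T_Λ`. -/
noncomputable def shiftF (Λ : KGraph k) (p : Fin k → ℤ) : TalF Λ → TalF Λ :=
  Finsupp.mapDomain (fun q => (q.1, q.2 + p))

/-- A `ℤᵏ`-order ideal of `T_Λ`: a submonoid, downward closed in the algebraic
preorder, and closed under the `ℤᵏ`-action (expressed on representatives). -/
noncomputable def IsOrderIdeal (Λ : KGraph k) (hfin : Λ.RowFinite)
    (J : Set (Tal Λ hfin)) : Prop :=
  (0 : Tal Λ hfin) ∈ J ∧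
  (∀ a b, a ∈ J → b ∈ J → a + b ∈ J) ∧
  (∀ a b : Tal Λ hfin, a + b ∈ J → a ∈ J) ∧
  (∀ (p : Fin k → ℤ) (a : TalF Λ), tmk Λ hfin a ∈ J → tmk Λ hfin (shiftF Λ p a) ∈ J)

/-- `H ⊆ Λ⁰` is hereditary. -/
def Hereditary (Λ : KGraph k) (H : Set Λ.V) : Prop :=
  ∀ p : Λ.P, Λ.r p ∈ H → Λ.s p ∈ H

/-- `H ⊆ Λ⁰` is saturated. -/
def Saturated (Λ : KGraph k) (H : Set Λ.V) : Prop :=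
  ∀ (v : Λ.V) (n : Fin k → ℕ),
    (∀ p : Λ.P, Λ.r p = v → Λ.d p = n → Λ.s p ∈ H) → v ∈ H

/-- The `ℤᵏ`-order ideal of `T_Λ` generated by a set `X ⊆ Λ⁰` of vertices:
all `x` with `x ≤ Σᵢ ⁿⁱvᵢ` for finitely many `vᵢ ∈ X`, `nᵢ ∈ ℤᵏ`. -/
noncomputable def genIdeal (Λ : KGraph k) (hfin : Λ.RowFinite) (X : Set Λ.V) :
    Set (Tal Λ hfin) :=
  {x | ∃ b : TalF Λ, (∀ q ∈ b.support, q.1 ∈ X) ∧ ∃ z, x + z = tmk Λ hfin b}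

end KGraph

namespace KGraph

/-- `Λ^{min}(l, m)`: pairs `(ρ, σ)` with `lρ = mσ` and `d(lρ) = d(l) ∨ d(m)`. -/
def MinExt (Λ : KGraph k) (l m : Λ.P) : Set (Λ.P × Λ.P) :=
  {rs | ∃ (h1 : Λ.s l = Λ.r rs.1) (h2 : Λ.s m = Λ.r rs.2),
    Λ.comp l rs.1 h1 = Λ.comp m rs.2 h2 ∧
    Λ.d (Λ.comp l rs.1 h1) = Λ.d l ⊔ Λ.d m}

/-- A periodic pair: distinct paths `α ≠ β` with `s(α) = s(β)` such that
`Λ^{min}(αη, βη) ≠ ∅` for every `η` with `r(η) = s(α)`. -/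
def IsPeriodicPair (Λ : KGraph k) (α β : Λ.P) : Prop :=
  α ≠ β ∧ Λ.s α = Λ.s β ∧
  ∀ (η : Λ.P) (h1 : Λ.s α = Λ.r η) (h2 : Λ.s β = Λ.r η),
    (MinExt Λ (Λ.comp α η h1) (Λ.comp β η h2)).Nonempty

end KGraph

/-!
Let `m = d(α) ∨ d(β)`. For `λ ∈ s(α)Λ^{m - d(α)}`, an element `(ρ, σ)` of
`Λ^min(αλ, βλ)` has `d(σ) = m - d(β)`; factoring `λσ = zt` with `d(z) = d(σ)` and
comparing the initial segments of degree `m` of `αλρ = βzt` gives `αλ = βz`. By symmetry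
`λ ↦ z` is a source-preserving bijection `s(α)Λ^{m - d(α)} ≅ s(β)Λ^{m - d(β)}`.
Iterating the defining relations gives `v(n) = Σ_{λ ∈ vΛᴺ} s(λ)(n + N)` in `T_Λ`, so
expanding `s(α)(0)` along degree `m - d(α)` and `s(α)(p)` along degree `m - d(β)`, where
`p = (m - d(α)) - (m - d(β)) ≠ 0` because `d(α) ≠ d(β)`, yields `ᵖs(α)(0) = s(α)(0)`.
Without sources every relation equates a generator with a nonempty sum, so no generator
is identified with `0`.
-/

namespace KGraph

variable {k : ℕ} (Λ : KGraph k)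

theorem eq_and_eq_of_comp_eq {p q p' q' : Λ.P} {h : Λ.s p = Λ.r q} {h' : Λ.s p' = Λ.r q'}
    (he : Λ.comp p q h = Λ.comp p' q' h') (hd : Λ.d p = Λ.d p') : p = p' ∧ q = q' := by
  have hdq : Λ.d q = Λ.d q' := by
    have := congrArg Λ.d he
    rwa [Λ.d_comp, Λ.d_comp, hd, add_right_inj] at this
  obtain ⟨_, _, huniq⟩ := Λ.factor _ _ _ (Λ.d_comp p q h)
  exact Prod.ext_iff.mp ((huniq (p, q) ⟨h, rfl, rfl, rfl⟩).trans
    (huniq (p', q') ⟨h', he.symm, hd.symm, hdq.symm⟩).symm)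

theorem eq_ident_of_d_eq_zero {p : Λ.P} (hp : Λ.d p = 0) : p = Λ.ident (Λ.r p) :=
  (Λ.eq_and_eq_of_comp_eq (h := (Λ.r_ident _).symm) (h' := by rw [Λ.s_ident])
    ((Λ.comp_ident p _).trans (Λ.ident_comp p _).symm) (by rw [hp, Λ.d_ident])).1

@[simp]
theorem mem_pathsSet_toFinset (hfin : Λ.RowFinite) {v : Λ.V} {n : Fin k → ℕ} {p : Λ.P} :
    p ∈ (hfin v n).toFinset ↔ Λ.r p = v ∧ Λ.d p = n := by
  simp [pathsSet]

theorem sum_pathsSet_add {M : Type*} [AddCommMonoid M] (hfin : Λ.RowFinite) (g : Λ.V → M)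
    (v : Λ.V) (m n : Fin k → ℕ) :
    ∑ p ∈ (hfin v (m + n)).toFinset, g (Λ.s p) =
      ∑ μ ∈ (hfin v m).toFinset, ∑ ν ∈ (hfin (Λ.s μ) n).toFinset, g (Λ.s ν) := by
  rw [Finset.sum_sigma']
  symm
  refine Finset.sum_bij
    (fun x hx => Λ.comp x.1 x.2
      ((Λ.mem_pathsSet_toFinset hfin).mp (Finset.mem_sigma.mp hx).2).1.symm)
    ?_ ?_ ?_ ?_
  · rintro ⟨μ, ν⟩ hx
    simp only [Finset.mem_sigma, mem_pathsSet_toFinset] at hx ⊢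
    rw [Λ.r_comp, Λ.d_comp, hx.1.1, hx.1.2, hx.2.2]
    exact ⟨rfl, rfl⟩
  · rintro ⟨μ, ν⟩ hx ⟨μ', ν'⟩ hx' he
    simp only [Finset.mem_sigma, mem_pathsSet_toFinset] at hx hx'
    obtain ⟨rfl, rfl⟩ := Λ.eq_and_eq_of_comp_eq he (hx.1.2.trans hx'.1.2.symm)
    rfl
  · intro p hp
    rw [mem_pathsSet_toFinset] at hp
    obtain ⟨⟨μ, ν⟩, ⟨h, rfl, hμ, hν⟩, -⟩ := Λ.factor p m n hp.2
    refine ⟨⟨μ, ν⟩, ?_, rfl⟩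
    simp only [Finset.mem_sigma, mem_pathsSet_toFinset]
    exact ⟨⟨(Λ.r_comp μ ν h).symm.trans hp.1, hμ⟩, h.symm, hν⟩
  · rintro ⟨μ, ν⟩ -
    rw [Λ.s_comp]

end KGraph

theorem AddConGen.Rel.eq_zero_iff {M : Type*} [AddCommMonoid M] [PartialOrder M]
    [CanonicallyOrderedAdd M] {r : M → M → Prop} (hr : ∀ a b, r a b → (a = 0 ↔ b = 0))
    {a b : M} (h : AddConGen.Rel r a b) : a = 0 ↔ b = 0 := by
  induction h with
  | of a b hab => exact hr a b hab
  | refl => rfl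
  | symm _ ih => exact ih.symm
  | trans _ _ ih₁ ih₂ => exact ih₁.trans ih₂
  | add _ _ ih₁ ih₂ => rw [add_eq_zero, add_eq_zero, ih₁, ih₂]

namespace KGraph

variable {k : ℕ} (Λ : KGraph k) (hfin : Λ.RowFinite)

def castDeg (n : Fin k → ℕ) : Fin k → ℤ := fun j => n j

@[simp]
theorem castDeg_zero : castDeg (0 : Fin k → ℕ) = 0 := by
  ext; simp [castDeg]

@[simp]
theorem castDeg_add (m n : Fin k → ℕ) : castDeg (m + n) = castDeg m + castDeg n := by
  ext; simp [castDeg]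

@[simp]
theorem castDeg_single (i : Fin k) : castDeg (Pi.single i 1) = Pi.single i (1 : ℤ) := by
  ext j; by_cases h : j = i <;> simp [castDeg, h]

/-- The generator `v(n)` of `T_Λ`. -/
noncomputable def vertex (v : Λ.V) (n : Fin k → ℤ) : Tal Λ hfin :=
  tmk Λ hfin (Finsupp.single (v, n) 1)

theorem tmk_shiftF_single (p : Fin k → ℤ) (v : Λ.V) (n : Fin k → ℤ) :
    tmk Λ hfin (shiftF Λ p (Finsupp.single (v, n) 1)) = vertex Λ hfin v (n + p) := by
  rw [shiftF, Finsupp.mapDomain_single, vertex]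

theorem vertex_eq_sum_edges (v : Λ.V) (n : Fin k → ℤ) (i : Fin k) :
    vertex Λ hfin v n = ∑ e ∈ (hfin v (Pi.single i 1)).toFinset,
      vertex Λ hfin (Λ.s e) (n + Pi.single i 1) := by
  simp only [vertex, tmk, ← map_sum]
  exact (AddCon.eq _).mpr (AddConGen.Rel.of _ _ ⟨v, n, i, rfl, rfl⟩)

theorem pathsSet_zero_toFinset (v : Λ.V) : (hfin v 0).toFinset = {Λ.ident v} := by
  ext p
  rw [mem_pathsSet_toFinset, Finset.mem_singleton]
  constructor
  · rintro ⟨rfl, hp⟩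
    exact Λ.eq_ident_of_d_eq_zero hp
  · rintro rfl
    exact ⟨Λ.r_ident v, Λ.d_ident v⟩

theorem vertex_eq_sum_paths_add {m m' : Fin k → ℕ}
    (hm : ∀ v n, vertex Λ hfin v n =
      ∑ p ∈ (hfin v m).toFinset, vertex Λ hfin (Λ.s p) (n + castDeg m))
    (hm' : ∀ v n, vertex Λ hfin v n =
      ∑ p ∈ (hfin v m').toFinset, vertex Λ hfin (Λ.s p) (n + castDeg m'))
    (v : Λ.V) (n : Fin k → ℤ) :
    vertex Λ hfin v n =
      ∑ p ∈ (hfin v (m + m')).toFinset, vertex Λ hfin (Λ.s p) (n + castDeg (m + m')) := by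
  rw [sum_pathsSet_add Λ hfin (fun w => vertex Λ hfin w (n + castDeg (m + m'))), hm]
  refine Finset.sum_congr rfl fun μ _ => ?_
  rw [hm', castDeg_add, add_assoc]

theorem vertex_eq_sum_paths (m : Fin k → ℕ) (v : Λ.V) (n : Fin k → ℤ) :
    vertex Λ hfin v n =
      ∑ p ∈ (hfin v m).toFinset, vertex Λ hfin (Λ.s p) (n + castDeg m) := by
  have h₀ : ∀ v n, vertex Λ hfin v n =
      ∑ p ∈ (hfin v 0).toFinset, vertex Λ hfin (Λ.s p) (n + castDeg 0) := by
    simp [pathsSet_zero_toFinset, Λ.s_ident]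
  induction m using Pi.single_induction generalizing v n with
  | zero => exact h₀ v n
  | add m m' ih ih' => exact vertex_eq_sum_paths_add Λ hfin ih ih' v n
  | single i m =>
    induction m generalizing v n with
    | zero => rw [Pi.single_zero]; exact h₀ v n
    | succ m ih =>
      have e : (Pi.single i (m + 1) : Fin k → ℕ) = Pi.single i m + Pi.single i 1 :=
        (Pi.single_add (f := fun _ => ℕ) i m 1)
      simp only [e]
      refine vertex_eq_sum_paths_add Λ hfin ih (fun v n => ?_) v n
      rw [castDeg_single]
      exact vertex_eq_sum_edges Λ hfin v n i

theorem vertex_ne_zero (hns : Λ.NoSources) (v : Λ.V) (n : Fin k → ℤ) :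
    vertex Λ hfin v n ≠ 0 := by
  have hrel : ∀ a b, TalRel Λ hfin a b → (a = 0 ↔ b = 0) := by
    rintro _ _ ⟨v, n, i, rfl, rfl⟩
    obtain ⟨e, he⟩ := hns v (Pi.single i 1)
    refine iff_of_false (Finsupp.single_ne_zero.mpr one_ne_zero) fun h => ?_
    have := (Finset.sum_eq_zero_iff.mp h) e ((Λ.mem_pathsSet_toFinset hfin).mpr he)
    exact Finsupp.single_ne_zero.mpr one_ne_zero this
  intro h
  rw [vertex, tmk, ← map_zero (TalCon Λ hfin).mk'] at h
  exact Finsupp.single_ne_zero.mpr one_ne_zero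
    ((AddConGen.Rel.eq_zero_iff hrel ((AddCon.eq _).mp h)).mpr rfl)

end KGraph

namespace KGraph.IsPeriodicPair

variable {k : ℕ} {Λ : KGraph k} {α β : Λ.P}

theorem symm (hper : IsPeriodicPair Λ α β) : IsPeriodicPair Λ β α := by
  obtain ⟨hne, hs, hmin⟩ := hper
  refine ⟨hne.symm, hs.symm, fun η h₁ h₂ => ?_⟩
  obtain ⟨⟨ρ, σ⟩, hρ, hσ, he, hd⟩ := hmin η h₂ h₁
  exact ⟨(σ, ρ), hσ, hρ, he.symm, by rw [← he, hd, sup_comm]⟩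

theorem exists_comp_eq (hper : IsPeriodicPair Λ α β) {l : Λ.P} (hl : Λ.s α = Λ.r l)
    (hd : Λ.d α + Λ.d l = Λ.d α ⊔ Λ.d β) :
    ∃ (z : Λ.P) (hz : Λ.s β = Λ.r z), Λ.comp β z hz = Λ.comp α l hl := by
  have hl' : Λ.s β = Λ.r l := hper.2.1 ▸ hl
  obtain ⟨⟨ρ, σ⟩, hρ, hσ, he, hdeg⟩ := hper.2.2 l hl hl'
  dsimp only at hρ hσ he hdeg
  have hsup : (Λ.d α + Λ.d l) ⊔ (Λ.d β + Λ.d l) = Λ.d α + Λ.d l + Λ.d l := by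
    calc _ = (Λ.d α ⊔ Λ.d β) + Λ.d l := by ext j; simp [max_add_add_right]
      _ = _ := by rw [← hd]
  have hdσ : Λ.d β + Λ.d σ = Λ.d α + Λ.d l := by
    simp only [he, Λ.d_comp, hsup] at hdeg
    rw [add_right_comm] at hdeg
    exact add_right_cancel hdeg
  have hσ' : Λ.s l = Λ.r σ := (Λ.s_comp β l hl').symm.trans hσ
  obtain ⟨⟨z, t⟩, ⟨hzt, hzt_eq, hdz, -⟩, -⟩ :=
    Λ.factor (Λ.comp l σ hσ') (Λ.d σ) (Λ.d l) (by rw [Λ.d_comp, add_comm])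
  dsimp only at hzt hzt_eq hdz
  have hz : Λ.s β = Λ.r z := by rw [hl', ← Λ.r_comp l σ hσ', ← hzt_eq, Λ.r_comp]
  refine ⟨z, hz, (Λ.eq_and_eq_of_comp_eq (q := t) (q' := ρ) (h := by rwa [Λ.s_comp])
    (h' := hρ) ?_ ?_).1⟩
  · calc Λ.comp (Λ.comp β z hz) t _
        = Λ.comp β (Λ.comp z t hzt) (by rwa [Λ.r_comp]) := Λ.comp_assoc _ _ _ _ _ _ _
      _ = Λ.comp β (Λ.comp l σ hσ') (by rwa [Λ.r_comp]) := by congr 1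
      _ = Λ.comp (Λ.comp β l hl') σ hσ := (Λ.comp_assoc _ _ _ _ _ _ _).symm
      _ = Λ.comp (Λ.comp α l hl) ρ hρ := he.symm
  · rw [Λ.d_comp, Λ.d_comp, hdz, hdσ]

theorem d_ne (hper : IsPeriodicPair Λ α β) : Λ.d α ≠ Λ.d β := by
  intro hd
  obtain ⟨z, hz, he⟩ := hper.exists_comp_eq (l := Λ.ident (Λ.s α)) (Λ.r_ident _).symm
    (by rw [Λ.d_ident, add_zero, hd, sup_idem])
  exact hper.1 (Λ.eq_and_eq_of_comp_eq he hd.symm).1.symm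

theorem exists_d_eq_comp_eq (hper : IsPeriodicPair Λ α β) {mα mβ : Fin k → ℕ}
    (hα : Λ.d α + mα = Λ.d α ⊔ Λ.d β) (hβ : Λ.d β + mβ = Λ.d α ⊔ Λ.d β)
    {l : Λ.P} (hl : Λ.s α = Λ.r l) (hdl : Λ.d l = mα) :
    ∃ (z : Λ.P) (hz : Λ.s β = Λ.r z), Λ.d z = mβ ∧ Λ.comp β z hz = Λ.comp α l hl := by
  obtain ⟨z, hz, he⟩ := hper.exists_comp_eq hl (hdl ▸ hα)
  refine ⟨z, hz, add_left_cancel (a := Λ.d β) ?_, he⟩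
  rw [hβ, ← Λ.d_comp β z hz, he, Λ.d_comp, hdl, hα]

theorem sum_pathsSet_eq {M : Type*} [AddCommMonoid M] (hper : IsPeriodicPair Λ α β)
    (hfin : Λ.RowFinite) (g : Λ.V → M) {mα mβ : Fin k → ℕ}
    (hα : Λ.d α + mα = Λ.d α ⊔ Λ.d β) (hβ : Λ.d β + mβ = Λ.d α ⊔ Λ.d β) :
    ∑ l ∈ (hfin (Λ.s α) mα).toFinset, g (Λ.s l) =
      ∑ z ∈ (hfin (Λ.s β) mβ).toFinset, g (Λ.s z) := by
  have hex l (hl : l ∈ (hfin (Λ.s α) mα).toFinset) :=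
    hper.exists_d_eq_comp_eq hα hβ ((Λ.mem_pathsSet_toFinset hfin).mp hl).1.symm
      ((Λ.mem_pathsSet_toFinset hfin).mp hl).2
  refine Finset.sum_bij (fun l hl => (hex l hl).choose) (fun l hl => ?_)
    (fun l hl l' hl' h => ?_) (fun z hz' => ?_) (fun l hl => ?_)
  · obtain ⟨hr, hd, -⟩ := (hex l hl).choose_spec
    exact (Λ.mem_pathsSet_toFinset hfin).mpr ⟨hr.symm, hd⟩
  · obtain ⟨hr, -, he⟩ := (hex l hl).choose_spec
    obtain ⟨hr', -, he'⟩ := (hex l' hl').choose_spec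
    simp only [h] at he
    exact (Λ.eq_and_eq_of_comp_eq (he.symm.trans he') rfl).2
  · obtain ⟨hrz, hdz⟩ := (Λ.mem_pathsSet_toFinset hfin).mp hz'
    obtain ⟨l, hl, hdl, he⟩ := hper.symm.exists_d_eq_comp_eq (sup_comm (Λ.d α) _ ▸ hβ)
      (sup_comm (Λ.d α) _ ▸ hα) hrz.symm hdz
    have hl' : l ∈ (hfin (Λ.s α) mα).toFinset :=
      (Λ.mem_pathsSet_toFinset hfin).mpr ⟨hl.symm, hdl⟩
    refine ⟨l, hl', ?_⟩
    obtain ⟨hr', -, he'⟩ := (hex l hl').choose_spec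
    exact (Λ.eq_and_eq_of_comp_eq (he'.trans he) rfl).2
  · obtain ⟨hr, -, he⟩ := (hex l hl).choose_spec
    have hs := congrArg Λ.s he
    rw [Λ.s_comp, Λ.s_comp] at hs
    exact congrArg g hs.symm

theorem exists_vertex_shift_eq (hper : IsPeriodicPair Λ α β) (hfin : Λ.RowFinite) :
    ∃ p : Fin k → ℤ, p ≠ 0 ∧ vertex Λ hfin (Λ.s α) p = vertex Λ hfin (Λ.s α) 0 := by
  obtain ⟨mα, hα⟩ := exists_add_of_le (le_sup_left : Λ.d α ≤ Λ.d α ⊔ Λ.d β)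
  obtain ⟨mβ, hβ⟩ := exists_add_of_le (le_sup_right : Λ.d β ≤ Λ.d α ⊔ Λ.d β)
  refine ⟨castDeg mα - castDeg mβ, fun hp => hper.d_ne ?_, ?_⟩
  · have hm : mα = mβ := funext fun j => by
      simpa [castDeg, sub_eq_zero] using congrFun hp j
    exact add_right_cancel (hα.symm.trans (hm ▸ hβ))
  · calc vertex Λ hfin (Λ.s α) (castDeg mα - castDeg mβ)
        = vertex Λ hfin (Λ.s β) (castDeg mα - castDeg mβ) := by rw [hper.2.1]
      _ = ∑ z ∈ (hfin (Λ.s β) mβ).toFinset, vertex Λ hfin (Λ.s z) (castDeg mα) := by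
        rw [vertex_eq_sum_paths Λ hfin mβ, sub_add_cancel]
      _ = ∑ l ∈ (hfin (Λ.s α) mα).toFinset, vertex Λ hfin (Λ.s l) (castDeg mα) :=
        (hper.sum_pathsSet_eq hfin (vertex Λ hfin · (castDeg mα)) hα.symm hβ.symm).symm
      _ = vertex Λ hfin (Λ.s α) 0 := by rw [vertex_eq_sum_paths Λ hfin mα _ 0, zero_add]

theorem exists_tmk_shiftF_eq (hper : IsPeriodicPair Λ α β) (hfin : Λ.RowFinite)
    (hns : Λ.NoSources) :
    ∃ a : TalF Λ, tmk Λ hfin a ≠ 0 ∧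
      ∃ p : Fin k → ℤ, p ≠ 0 ∧ tmk Λ hfin (shiftF Λ p a) = tmk Λ hfin a := by
  obtain ⟨p, hp, hshift⟩ := hper.exists_vertex_shift_eq hfin
  refine ⟨Finsupp.single (Λ.s α, 0) 1, vertex_ne_zero Λ hfin hns _ _, p, hp, ?_⟩
  rw [tmk_shiftF_single, zero_add]
  exact hshift

end KGraph.IsPeriodicPair

open KGraph in
/-- If a row-finite `k`-graph `Λ` (with no sources) contains a periodic pair, then
`T_Λ` contains a nonzero periodic element; equivalently, if `ℤᵏ` acts freely on
`T_Λ` then `Λ` is aperiodic in the sense of Lewin–Sims. -/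
theorem stmt14 {k : ℕ} (Λ : KGraph k) (hfin : Λ.RowFinite) (hns : Λ.NoSources) :
    ((∃ α β : Λ.P, IsPeriodicPair Λ α β) →
      ∃ a : TalF Λ, tmk Λ hfin a ≠ 0 ∧
        ∃ p : Fin k → ℤ, p ≠ 0 ∧ tmk Λ hfin (shiftF Λ p a) = tmk Λ hfin a) ∧
    ((∀ (a : TalF Λ) (p : Fin k → ℤ), p ≠ 0 →
        tmk Λ hfin (shiftF Λ p a) = tmk Λ hfin a → tmk Λ hfin a = 0) →
      ∀ α β : Λ.P, α ≠ β → Λ.s α = Λ.s β →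
        ∃ (η : Λ.P) (h1 : Λ.s α = Λ.r η) (h2 : Λ.s β = Λ.r η),
          MinExt Λ (Λ.comp α η h1) (Λ.comp β η h2) = ∅) := by
  refine ⟨fun ⟨_, _, hper⟩ => hper.exists_tmk_shiftF_eq hfin hns,
    fun hfree α β hne hs => ?_⟩
  by_contra! hmin
  obtain ⟨a, ha, p, hp, hshift⟩ :=
    IsPeriodicPair.exists_tmk_shiftF_eq ⟨hne, hs, hmin⟩ hfin hns
  exact ha (hfree a p hp hshift)
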